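/- (Deterministic core of the overhead theorem, F-S option.) Let N, M, U, D, V, L, K_V, K_L be positive integers with UD ≤ N, 3VL ≤ M, 3K_V ≤ U, 3K_L ≤ D, let c ∈ ℂ^N have unit-modulus entries, let 𝒩_p ⊆ {0,…,N−1} have cardinality N_p and ℳ_p ⊆ {0,…,M−1} have cardinality M_p, and define Ā_{τ,ext} = (1/√N_p) P_{𝒩_p} diag(c) F_{N,N}, Ā_τ = the first UD columns of Ā_{τ,ext}, and Ā_θ = (1/√M_p) P_{ℳ_p} F_{M,M}. Let δ_τ, δ_θ > 0 satisfy δ_τ + δ_θ + δ_τδ_θ < 1/√3. If δ_{9K_VK_L}(Ā_{τ,ext}) < δ_τ and δ_{3VL}(Ā_θ*) < δ_θ, then the matrix A = Ā_θ* ⊗ Ā_τ, viewed as acting on 3-level block vectors in ℂ^{M·U·D}, has hierarchical restricted isometry constant δ_{(3VL,3K_V,3K_L)}(A) < 1/√3. -/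

import Mathlib

open scoped Classical

noncomputable section

/-- A vector is `s`-sparse if at most `s` of its entries are nonzero. -/
def Sparse {ι : Type*} [Fintype ι] (s : ℕ) (x : ι → ℂ) : Prop :=
  (Finset.univ.filter fun i => x i ≠ 0).card ≤ s

/-- Squared Euclidean norm. -/
def sqNorm {ι : Type*} [Fintype ι] (x : ι → ℂ) : ℝ := ∑ i, ‖x i‖ ^ 2

/-- Euclidean norm. -/
def enorm {ι : Type*} [Fintype ι] (x : ι → ℂ) : ℝ := Real.sqrt (sqNorm x)

/-- The restricted isometry constant `δ_s(A)`: the smallest `δ ≥ 0` such that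
`(1−δ)‖x‖² ≤ ‖Ax‖² ≤ (1+δ)‖x‖²` for every `s`-sparse `x`. -/
def RIPconst {m n : Type*} [Fintype m] [Fintype n] (A : Matrix m n ℂ) (s : ℕ) : ℝ :=
  sInf {δ : ℝ | 0 ≤ δ ∧ ∀ x : n → ℂ, Sparse s x →
    (1 - δ) * sqNorm x ≤ sqNorm (A.mulVec x) ∧ sqNorm (A.mulVec x) ≤ (1 + δ) * sqNorm x}

/-- `(s₁,s₂,s₃)`-hierarchical sparsity of a 3-level block vector: at most `s₁`
of the `N₁` level-1 blocks are nonzero, within each block at most `s₂` of the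
`N₂` level-2 blocks are nonzero, and each of those contains at most `s₃`
nonzero entries. -/
def HiSparse3 {N₁ N₂ N₃ : ℕ} (s₁ s₂ s₃ : ℕ) (x : Fin N₁ × Fin N₂ × Fin N₃ → ℂ) : Prop :=
  (Finset.univ.filter fun i₁ : Fin N₁ => (fun p : Fin N₂ × Fin N₃ => x (i₁, p)) ≠ 0).card ≤ s₁ ∧
  ∀ i₁ : Fin N₁,
    (Finset.univ.filter fun i₂ : Fin N₂ => (fun i₃ : Fin N₃ => x (i₁, i₂, i₃)) ≠ 0).card ≤ s₂ ∧
    ∀ i₂ : Fin N₂, Sparse s₃ (fun i₃ : Fin N₃ => x (i₁, i₂, i₃))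

/-- The hierarchical restricted isometry constant `δ_{(s₁,s₂,s₃)}(A)` of a
matrix acting on 3-level block vectors. -/
def HiRIPconst3 {m : Type*} [Fintype m] {N₁ N₂ N₃ : ℕ}
    (A : Matrix m (Fin N₁ × Fin N₂ × Fin N₃) ℂ) (s₁ s₂ s₃ : ℕ) : ℝ :=
  sInf {δ : ℝ | 0 ≤ δ ∧ ∀ x : Fin N₁ × Fin N₂ × Fin N₃ → ℂ, HiSparse3 s₁ s₂ s₃ x →
    (1 - δ) * sqNorm x ≤ sqNorm (A.mulVec x) ∧ sqNorm (A.mulVec x) ≤ (1 + δ) * sqNorm x}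

/-- `F_{N,M}`: the first `M` columns of the `N×N` DFT matrix,
`[F_{N,M}]_{nm} = e^{−2πi m n / N}`. -/
def Fmat (N M : ℕ) : Matrix (Fin N) (Fin M) ℂ := fun n m =>
  Complex.exp (-(2 * (Real.pi : ℂ) * Complex.I * (m.1 : ℂ) * (n.1 : ℂ)) / (N : ℂ))

/-- The identification of the pair `(u,d)` with the column index `uD + d` among
the first `UD` columns (lexicographic ordering). -/
def emb (U D N : ℕ) (h : U * D ≤ N) (p : Fin U × Fin D) : Fin N :=
  ⟨p.1.1 * D + p.2.1, by
    refine lt_of_lt_of_le ?_ h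
    calc p.1.1 * D + p.2.1 < p.1.1 * D + D := by omega
      _ = (p.1.1 + 1) * D := by ring
      _ ≤ U * D := Nat.mul_le_mul (Nat.succ_le_of_lt p.1.isLt) le_rfl⟩

/-- `Ā_{τ,ext} = (1/√N_p) P_{𝒩_p} diag(c) F_{N,N}`, with rows indexed by the
pilot subcarriers `𝒩_p = S`. -/
def AtauExt (N : ℕ) (c : Fin N → ℂ) (S : Finset (Fin N)) :
    Matrix {i // i ∈ S} (Fin N) ℂ := fun r n =>
  ((Real.sqrt S.card : ℝ) : ℂ)⁻¹ * c r.1 * Fmat N N r.1 n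

/-- `Ā_τ`: the first `UD` columns of `Ā_{τ,ext}`, with columns indexed by
pairs `(u,d)`. -/
def Atau (N U D : ℕ) (hUD : U * D ≤ N) (c : Fin N → ℂ) (S : Finset (Fin N)) :
    Matrix {i // i ∈ S} (Fin U × Fin D) ℂ := fun r p =>
  AtauExt N c S r (emb U D N hUD p)

/-- `Ā_θ = (1/√M_p) P_{ℳ_p} F_{M,M}`, with rows indexed by the observed
antennas `ℳ_p = T`. -/
def Atheta (M : ℕ) (T : Finset (Fin M)) :
    Matrix {i // i ∈ T} (Fin M) ℂ := fun r m =>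
  ((Real.sqrt T.card : ℝ) : ℂ)⁻¹ * Fmat M M r.1 m

/-- `A = Ā_θ* ⊗ Ā_τ` (F-S option), acting on 3-level block vectors in
`ℂ^{M·U·D}`: the outer index ranges over the `M` columns of `Ā_θ*` and the
inner indices over the `UD` columns of `Ā_τ`. -/
def AmatFS (N M U D : ℕ) (hUD : U * D ≤ N) (c : Fin N → ℂ)
    (S : Finset (Fin N)) (T : Finset (Fin M)) :
    Matrix ({i // i ∈ T} × {i // i ∈ S}) (Fin M × Fin U × Fin D) ℂ := fun r j =>
  star (Atheta M T r.1 j.1) * Atau N U D hUD c S r.2 j.2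

/-! Write `x = (x_m)_m` by its level-1 blocks. Then
`‖(Ā_θ* ⊗ Ā_τ) x‖² = ∑_r ‖Ā_θ* y_r‖²` with `(y_r)_m = (Ā_τ x_m)_r`. Every `y_r` vanishes outside
the at most `3VL` nonzero blocks of `x`, and every block `x_m` is `9K_VK_L`-sparse, so the two RIP
bounds chain to the constant `δ_θ + δ_τ + δ_θδ_τ`. The matrix `Ā_τ` inherits the RIP of
`Ā_{τ,ext}` because its columns are among those of `Ā_{τ,ext}`. -/

open Finset Matrix
open scoped Kronecker

section RIP

variable {ι m n : Type*} [Fintype ι] [Fintype m] [Fintype n]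

lemma sqNorm_nonneg (x : ι → ℂ) : 0 ≤ sqNorm x :=
  sum_nonneg fun i _ => by positivity

lemma sqNorm_prod {κ : Type*} [Fintype κ] (x : ι × κ → ℂ) :
    sqNorm x = ∑ i, sqNorm fun k => x (i, k) :=
  Fintype.sum_prod_type _

lemma sqNorm_mulVec_le (A : Matrix m n ℂ) (x : n → ℂ) :
    sqNorm (A *ᵥ x) ≤ (∑ r, ∑ j, ‖A r j‖ ^ 2) * sqNorm x := by
  rw [sqNorm, sum_mul]
  refine sum_le_sum fun r _ => ?_
  calc ‖(A *ᵥ x) r‖ ^ 2 ≤ (∑ j, ‖A r j‖ * ‖x j‖) ^ 2 := by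
        gcongr
        exact (norm_sum_le _ _).trans_eq (by simp only [norm_mul])
    _ ≤ (∑ j, ‖A r j‖ ^ 2) * sqNorm x := sum_mul_sq_le_sq_mul_sq _ _ _

def IsRIPBound (A : Matrix m n ℂ) (P : (n → ℂ) → Prop) (δ : ℝ) : Prop :=
  ∀ x, P x → (1 - δ) * sqNorm x ≤ sqNorm (A *ᵥ x) ∧ sqNorm (A *ᵥ x) ≤ (1 + δ) * sqNorm x

lemma exists_isRIPBound (A : Matrix m n ℂ) (P : (n → ℂ) → Prop) :
    ∃ δ, 0 ≤ δ ∧ IsRIPBound A P δ := by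
  set C := ∑ r, ∑ j, ‖A r j‖ ^ 2
  have hC : 0 ≤ C := by positivity
  refine ⟨1 + C, by positivity, fun x _ => ⟨?_, ?_⟩⟩
  · nlinarith [sqNorm_nonneg x, sqNorm_nonneg (A *ᵥ x)]
  · nlinarith [sqNorm_nonneg x, sqNorm_mulVec_le A x]

lemma exists_isRIPBound_lt_of_RIPconst_lt {A : Matrix m n ℂ} {s : ℕ} {δ : ℝ}
    (h : RIPconst A s < δ) : ∃ δ' < δ, 0 ≤ δ' ∧ IsRIPBound A (Sparse s) δ' :=
  exists_lt_of_csInf_lt (exists_isRIPBound A (Sparse s)) h |>.imp fun _ h => ⟨h.2, h.1⟩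

lemma HiRIPconst3_le {N₁ N₂ N₃ : ℕ} {A : Matrix m (Fin N₁ × Fin N₂ × Fin N₃) ℂ}
    {s₁ s₂ s₃ : ℕ} {δ : ℝ} (hδ : 0 ≤ δ) (h : IsRIPBound A (HiSparse3 s₁ s₂ s₃) δ) :
    HiRIPconst3 A s₁ s₂ s₃ ≤ δ :=
  csInf_le ⟨0, fun _ hd => hd.1⟩ ⟨hδ, h⟩

lemma IsRIPBound.sum_le {A : Matrix m n ℂ} {P : (n → ℂ) → Prop} {δ : ℝ}
    (h : IsRIPBound A P δ) {v : ι → n → ℂ} (hv : ∀ i, P (v i)) :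
    (1 - δ) * ∑ i, sqNorm (v i) ≤ ∑ i, sqNorm (A *ᵥ v i) ∧
      ∑ i, sqNorm (A *ᵥ v i) ≤ (1 + δ) * ∑ i, sqNorm (v i) := by
  rw [mul_sum, mul_sum]
  exact ⟨sum_le_sum fun i _ => (h _ (hv i)).1, sum_le_sum fun i _ => (h _ (hv i)).2⟩

lemma IsRIPBound.mono {A : Matrix m n ℂ} {P Q : (n → ℂ) → Prop} {δ : ℝ}
    (h : IsRIPBound A Q δ) (hPQ : ∀ x, P x → Q x) : IsRIPBound A P δ :=
  fun x hx => h x (hPQ x hx)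

end RIP

section Submatrix

variable {α β m : Type*} [Fintype α] [Fintype β] [Fintype m] {e : α → β}

lemma Function.Injective.sum_extend_zero {M : Type*} [AddCommMonoid M] (he : e.Injective)
    (w : α → ℂ) (f : β → ℂ → M) (hf : ∀ b, f b 0 = 0) :
    ∑ b, f b (Function.extend e w 0 b) = ∑ a, f (e a) (w a) := by
  rw [← sum_subset (subset_univ (univ.image e)) fun b _ hb => ?_,
    sum_image fun a _ a' _ h => he h]
  · exact sum_congr rfl fun a _ => by rw [he.extend_apply]
  · rw [Function.extend_apply' _ _ _ fun ⟨a, ha⟩ => hb (mem_image.2 ⟨a, mem_univ a, ha⟩)]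
    exact hf b

lemma Function.Injective.sparse_extend_zero (he : e.Injective) {s : ℕ} {w : α → ℂ}
    (hw : Sparse s w) : Sparse s (Function.extend e w 0) := by
  have hsupp : univ.filter (fun b => Function.extend e w 0 b ≠ 0) ⊆
      (univ.filter fun a => w a ≠ 0).image e := by
    intro b hb
    rw [mem_filter] at hb
    by_cases hr : ∃ a, e a = b
    · obtain ⟨a, rfl⟩ := hr
      rw [he.extend_apply] at hb
      exact mem_image_of_mem e (mem_filter.2 ⟨mem_univ a, hb.2⟩)
    · exact absurd (Function.extend_apply' _ _ _ hr) hb.2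
  exact (card_le_card hsupp).trans (card_image_le.trans hw)

lemma IsRIPBound.submatrix_of_injective {B : Matrix m β ℂ} {s : ℕ} {δ : ℝ}
    (h : IsRIPBound B (Sparse s) δ) (he : e.Injective) :
    IsRIPBound (B.submatrix id e) (Sparse s) δ := by
  intro w hw
  have hnorm : sqNorm (Function.extend e w 0) = sqNorm w :=
    he.sum_extend_zero w (fun _ z => ‖z‖ ^ 2) fun _ => by simp
  have hmulVec : B *ᵥ Function.extend e w 0 = B.submatrix id e *ᵥ w :=
    funext fun r => he.sum_extend_zero w (fun b z => B r b * z) fun _ => mul_zero _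
  simpa only [hnorm, hmulVec] using h _ (he.sparse_extend_zero hw)

end Submatrix

section Kronecker

variable {m₁ m₂ n₁ n₂ : Type*} [Fintype n₁] [Fintype n₂]

def BlockSparse (s : ℕ) (x : n₁ × n₂ → ℂ) : Prop :=
  (univ.filter fun i => (fun j => x (i, j)) ≠ 0).card ≤ s

lemma BlockSparse.sparse_mul {s₁ s₂ : ℕ} {x : n₁ × n₂ → ℂ} (hx : BlockSparse s₁ x)
    (hblocks : ∀ i, Sparse s₂ fun j => x (i, j)) : Sparse (s₁ * s₂) x := by
  have hfst : ∀ p ∈ univ.filter (fun p => x p ≠ 0),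
      p.1 ∈ univ.filter fun i => (fun j => x (i, j)) ≠ 0 := fun p hp =>
    mem_filter.2 ⟨mem_univ _, fun hblock => (mem_filter.1 hp).2 (congrFun hblock p.2)⟩
  have hfiber : ∀ i ∈ univ.filter (fun i => (fun j => x (i, j)) ≠ 0),
      (univ.filter (fun p => x p ≠ 0) |>.filter fun p => p.1 = i).card ≤ s₂ := by
    intro i _
    refine (card_le_card_of_injOn Prod.snd (fun p hp => ?_) fun p hp q hq h => ?_).trans
      (hblocks i)
    · obtain ⟨hp', rfl⟩ := mem_filter.1 hp
      exact mem_filter.2 ⟨mem_univ _, (mem_filter.1 hp').2⟩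
    · exact Prod.ext ((mem_filter.1 hp).2.trans (mem_filter.1 hq).2.symm) h
  calc _ ≤ s₂ * (univ.filter fun i => (fun j => x (i, j)) ≠ 0).card :=
        card_le_mul_card_image_of_maps_to hfst s₂ hfiber
    _ ≤ s₂ * s₁ := Nat.mul_le_mul_left s₂ hx
    _ = s₁ * s₂ := mul_comm _ _

lemma BlockSparse.sparse_mulVec_blocks {s : ℕ} {x : n₁ × n₂ → ℂ} (hx : BlockSparse s x)
    (A₂ : Matrix m₂ n₂ ℂ) (r : m₂) : Sparse s fun i => (A₂ *ᵥ fun j => x (i, j)) r := by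
  refine (card_le_card fun i hi => ?_).trans hx
  rw [mem_filter] at hi ⊢
  exact ⟨mem_univ i, fun h => hi.2 (by simp only [h, mulVec_zero, Pi.zero_apply])⟩

lemma sqNorm_kronecker_mulVec [Fintype m₁] [Fintype m₂] (A₁ : Matrix m₁ n₁ ℂ)
    (A₂ : Matrix m₂ n₂ ℂ) (x : n₁ × n₂ → ℂ) :
    sqNorm ((A₁ ⊗ₖ A₂) *ᵥ x) = ∑ r, sqNorm (A₁ *ᵥ fun i => (A₂ *ᵥ fun j => x (i, j)) r) := by
  rw [sqNorm, Fintype.sum_prod_type, sum_comm]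
  refine sum_congr rfl fun r₂ _ => sum_congr rfl fun r₁ _ => ?_
  simp only [mulVec, dotProduct, kronecker_apply, Fintype.sum_prod_type, mul_sum, mul_assoc]

theorem IsRIPBound.kronecker [Fintype m₁] [Fintype m₂] {A₁ : Matrix m₁ n₁ ℂ}
    {A₂ : Matrix m₂ n₂ ℂ} {s : ℕ} {P : (n₂ → ℂ) → Prop} {δ₁ δ₂ : ℝ} (hδ₁ : 0 ≤ δ₁)
    (h₁ : IsRIPBound A₁ (Sparse s) δ₁) (h₂ : IsRIPBound A₂ P δ₂) :
    IsRIPBound (A₁ ⊗ₖ A₂) (fun x => BlockSparse s x ∧ ∀ i, P fun j => x (i, j))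
      (δ₁ + δ₂ + δ₁ * δ₂) := by
  rintro x ⟨hx, hblocks⟩
  set y : n₁ → m₂ → ℂ := fun i => A₂ *ᵥ fun j => x (i, j)
  have hy : ∑ r, sqNorm (fun i => y i r) = ∑ i, sqNorm (y i) := sum_comm
  obtain ⟨hlo₁, hhi₁⟩ := h₁.sum_le fun r => hx.sparse_mulVec_blocks A₂ r
  obtain ⟨hlo₂, hhi₂⟩ := h₂.sum_le hblocks
  rw [hy, ← sqNorm_kronecker_mulVec] at hlo₁ hhi₁
  rw [← sqNorm_prod] at hlo₂ hhi₂
  have hcross := mul_le_mul_of_nonneg_left hhi₂ hδ₁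
  constructor <;> nlinarith

lemma HiSparse3.blockSparse_sparse {N₁ N₂ N₃ s₁ s₂ s₃ : ℕ} {x : Fin N₁ × Fin N₂ × Fin N₃ → ℂ}
    (hx : HiSparse3 s₁ s₂ s₃ x) :
    BlockSparse s₁ x ∧ ∀ i, Sparse (s₂ * s₃) fun p => x (i, p) :=
  ⟨hx.1, fun i => BlockSparse.sparse_mul (hx.2 i).1 (hx.2 i).2⟩

end Kronecker

lemma emb_injective (U D N : ℕ) (h : U * D ≤ N) : (emb U D N h).Injective := by
  have hemb : emb U D N h = Fin.castLE h ∘ finProdFinEquiv := by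
    funext p
    ext
    simp only [emb, Function.comp_apply, Fin.val_castLE, finProdFinEquiv_apply_val]
    ring
  rw [hemb]
  exact (Fin.castLE_injective h).comp finProdFinEquiv.injective

theorem overhead_deterministic_FS_general (N M U D V L KV KL : ℕ)
    (hUD : U * D ≤ N)
    (c : Fin N → ℂ)
    (S : Finset (Fin N)) (T : Finset (Fin M))
    (δτ δθ : ℝ)
    (hsum : δτ + δθ + δτ * δθ < 1 / Real.sqrt 3)
    (hRIPτ : RIPconst (AtauExt N c S) (9 * (KV * KL)) < δτ)
    (hRIPθ : RIPconst (fun (r : {i // i ∈ T}) (m : Fin M) => star (Atheta M T r m))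
      (3 * (V * L)) < δθ) :
    HiRIPconst3 (AmatFS N M U D hUD c S T) (3 * (V * L)) (3 * KV) (3 * KL) <
      1 / Real.sqrt 3 := by
  obtain ⟨δ₂, hδ₂τ, hδ₂, hτ⟩ := exists_isRIPBound_lt_of_RIPconst_lt hRIPτ
  obtain ⟨δ₁, hδ₁θ, hδ₁, hθ⟩ := exists_isRIPBound_lt_of_RIPconst_lt hRIPθ
  have hA : IsRIPBound (AmatFS N M U D hUD c S T) (HiSparse3 (3 * (V * L)) (3 * KV) (3 * KL))
      (δ₁ + δ₂ + δ₁ * δ₂) := by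
    have hkron := hθ.kronecker hδ₁ (hτ.submatrix_of_injective (emb_injective U D N hUD))
    refine hkron.mono fun x hx => ?_
    rw [show 9 * (KV * KL) = 3 * KV * (3 * KL) by ring]
    exact hx.blockSparse_sparse
  calc HiRIPconst3 (AmatFS N M U D hUD c S T) (3 * (V * L)) (3 * KV) (3 * KL)
      ≤ δ₁ + δ₂ + δ₁ * δ₂ := HiRIPconst3_le (by positivity) hA
    _ < 1 / Real.sqrt 3 := by nlinarith

/-- **deterministic core of the overhead theorem, F-S option.**
If `δ_{9K_VK_L}(Ā_{τ,ext}) < δ_τ` and `δ_{3VL}(Ā_θ*) < δ_θ` with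
`δ_τ + δ_θ + δ_τδ_θ < 1/√3`, then `δ_{(3VL,3K_V,3K_L)}(Ā_θ* ⊗ Ā_τ) < 1/√3`. -/
theorem overhead_deterministic_FS (N M U D V L KV KL : ℕ)
    (hN : 0 < N) (hM : 0 < M) (hU : 0 < U) (hD : 0 < D)
    (hV : 0 < V) (hL : 0 < L) (hKV : 0 < KV) (hKL : 0 < KL)
    (hUD : U * D ≤ N) (hVL : 3 * (V * L) ≤ M) (hKVU : 3 * KV ≤ U) (hKLD : 3 * KL ≤ D)
    (c : Fin N → ℂ) (hc : ∀ n, ‖c n‖ = 1)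
    (S : Finset (Fin N)) (T : Finset (Fin M))
    (δτ δθ : ℝ) (hδτ : 0 < δτ) (hδθ : 0 < δθ)
    (hsum : δτ + δθ + δτ * δθ < 1 / Real.sqrt 3)
    (hRIPτ : RIPconst (AtauExt N c S) (9 * (KV * KL)) < δτ)
    (hRIPθ : RIPconst (fun (r : {i // i ∈ T}) (m : Fin M) => star (Atheta M T r m))
      (3 * (V * L)) < δθ) :
    HiRIPconst3 (AmatFS N M U D hUD c S T) (3 * (V * L)) (3 * KV) (3 * KL) <
      1 / Real.sqrt 3 :=
  overhead_deterministic_FS_general N M U D V L KV KL hUD c S T δτ δθ hsum hRIPτ hRIPθ
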